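/- Let n ≥ 3 and let E ∈ M_n(𝕋) be the matrix all of whose entries equal 0 ∈ ℝ. If D ∈ M_n(𝕋) is a noncentral diagonal matrix two of whose diagonal entries are equal (d_{i,i} = d_{j,j} for some i ≠ j), then the distance between D and E in the commuting graph Γ(M_n(𝕋)) is at most 2. -/

import Mathlib

/-- The commuting graph of the semiring of `n × n` matrices over `R`: vertices are the
noncentral matrices, and two distinct vertices are adjacent iff they commute. -/
def commGraph (R : Type*) [Semiring R] (n : ℕ) :
    SimpleGraph {X : Matrix (Fin n) (Fin n) R // ¬ ∀ Y, X * Y = Y * X} where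
  Adj X Y := X ≠ Y ∧ X.1 * Y.1 = Y.1 * X.1
  symm := ⟨fun _ _ h => ⟨fun e => h.1 e.symm, h.2.symm⟩⟩
  loopless := ⟨fun _ h => h.1 rfl⟩


/-- The max-plus tropical semiring `ℝ ∪ {-∞}`, realized as the `Tropical` semiring on the
order dual of `WithBot ℝ`. -/
noncomputable instance : LinearOrderedAddCommMonoidWithTop ((WithBot ℝ)ᵒᵈ) :=
  { (inferInstance : AddCommMonoid ((WithBot ℝ)ᵒᵈ)),
    (inferInstance : LinearOrder ((WithBot ℝ)ᵒᵈ)),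
    (inferInstance : IsOrderedAddMonoid ((WithBot ℝ)ᵒᵈ)),
    (inferInstance : OrderTop ((WithBot ℝ)ᵒᵈ)) with
    top_add' := fun a => WithBot.bot_add a
    isAddLeftRegular_of_ne_top := fun _a ha _b _c h => WithBot.add_left_cancel ha h }

abbrev Trop : Type := Tropical ((WithBot ℝ)ᵒᵈ)

/-! The permutation matrix `P` of the transposition `(i j)` is a common neighbour of `D` and `E`:
conjugating by `P` swaps rows and columns `i` and `j`, which fixes every matrix with constant
entries and every diagonal matrix with `d_ii = d_jj`. -/

instance : Nontrivial Trop :=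
  ⟨0, 1, fun h => WithBot.bot_ne_coe (a := (0 : ℝ)) (congrArg Tropical.untrop h)⟩

namespace Matrix

variable {n R : Type*} [Fintype n] [DecidableEq n] [NonAssocSemiring R]

theorem permMatrix_mul_eq_mul_permMatrix_iff (σ : Equiv.Perm n) (A : Matrix n n R) :
    σ.permMatrix R * A = A * σ.permMatrix R ↔ ∀ k l, A (σ k) (σ l) = A k l := by
  rw [PEquiv.toMatrix_toPEquiv_mul, PEquiv.mul_toMatrix_toPEquiv]
  refine ⟨fun h k l => by simpa using congr_fun₂ h k (σ l), fun h => ?_⟩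
  ext k l
  simpa using h k (σ.symm l)

theorem permMatrix_mul_eq_mul_permMatrix_of_forall_eq (σ : Equiv.Perm n) {A : Matrix n n R}
    {c : R} (hA : ∀ k l, A k l = c) : σ.permMatrix R * A = A * σ.permMatrix R :=
  (permMatrix_mul_eq_mul_permMatrix_iff σ A).2 fun k l => by rw [hA, hA]

theorem permMatrix_mul_eq_mul_permMatrix_of_offDiag_eq_zero (σ : Equiv.Perm n)
    {A : Matrix n n R} (hA : ∀ k l, k ≠ l → A k l = 0) (hσ : ∀ k, A (σ k) (σ k) = A k k) :
    σ.permMatrix R * A = A * σ.permMatrix R := by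
  refine (permMatrix_mul_eq_mul_permMatrix_iff σ A).2 fun k l => ?_
  obtain rfl | hkl := eq_or_ne k l
  · exact hσ k
  · rw [hA k l hkl, hA _ _ (σ.injective.ne hkl)]

theorem not_forall_permMatrix_mul_eq_mul_permMatrix [Nontrivial R] {σ : Equiv.Perm n} {k : n}
    (hk : σ k ≠ k) :
    ¬ ∀ Y : Matrix n n R, σ.permMatrix R * Y = Y * σ.permMatrix R := by
  intro h
  have := (permMatrix_mul_eq_mul_permMatrix_iff σ (single k k (1 : R))).1 (h _) k k
  simp only [single_apply, and_self, ite_true, if_neg hk.symm, zero_ne_one] at this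

end Matrix

theorem dist_le_two_of_diagonal_repeated_general (n : ℕ)
    (D E : Matrix (Fin n) (Fin n) Trop) (hEdef : ∀ i j, E i j = 1)
    (hdiag : ∀ i j : Fin n, i ≠ j → D i j = 0)
    (i j : Fin n) (hij : i ≠ j) (heq : D i i = D j j)
    (hD : ¬ ∀ Y, D * Y = Y * D) (hE : ¬ ∀ Y, E * Y = Y * E) :
    (commGraph Trop n).edist ⟨D, hD⟩ ⟨E, hE⟩ ≤ 2 := by
  set P := (Equiv.swap i j).permMatrix Trop
  have hP : ¬ ∀ Y, P * Y = Y * P :=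
    Matrix.not_forall_permMatrix_mul_eq_mul_permMatrix (k := i) <| by
      rw [Equiv.swap_apply_left]; exact hij.symm
  have hDP : (commGraph Trop n).Adj ⟨D, hD⟩ ⟨P, hP⟩ := by
    refine ⟨fun h => ?_, (Matrix.permMatrix_mul_eq_mul_permMatrix_of_offDiag_eq_zero _ hdiag
      (Equiv.apply_swap_eq_self (v := D.diag) heq)).symm⟩
    have := congr_fun₂ (congrArg Subtype.val h) i j
    simp [P, PEquiv.toMatrix_apply, hdiag i j hij] at this
  have hPE : (commGraph Trop n).Adj ⟨P, hP⟩ ⟨E, hE⟩ := by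
    refine ⟨fun h => ?_, Matrix.permMatrix_mul_eq_mul_permMatrix_of_forall_eq _ hEdef⟩
    have := congr_fun₂ (congrArg Subtype.val h) i i
    simp [P, PEquiv.toMatrix_apply, hEdef, hij.symm] at this
  simpa using (SimpleGraph.Walk.cons hDP (.cons hPE .nil)).edist_le

/-- For `n ≥ 3`, if `D ∈ M_n(𝕋)` is a noncentral diagonal matrix with two equal diagonal
entries, then the distance between `D` and the all-ones matrix `E` in `Γ(M_n(𝕋))` is at
most 2. -/
theorem dist_le_two_of_diagonal_repeated (n : ℕ) (hn : 3 ≤ n)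
    (D E : Matrix (Fin n) (Fin n) Trop) (hEdef : ∀ i j, E i j = 1)
    (hdiag : ∀ i j : Fin n, i ≠ j → D i j = 0)
    (i j : Fin n) (hij : i ≠ j) (heq : D i i = D j j)
    (hD : ¬ ∀ Y, D * Y = Y * D) (hE : ¬ ∀ Y, E * Y = Y * E) :
    (commGraph Trop n).edist ⟨D, hD⟩ ⟨E, hE⟩ ≤ 2 :=
  dist_le_two_of_diagonal_repeated_general n D E hEdef hdiag i j hij heq hD hE
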